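/- If a group G contains ℤ × F₂ as a subgroup, then G does not satisfy the Howson property. -/

import Mathlib

/-!
In `F₂ × ℤ`, the graph of the homomorphism `φ : F₂ → ℤ` with `a ↦ 1`, `b ↦ 0` and the factor
`F₂ × 1` are finitely generated, and they intersect in `ker φ × 1`. Sending `a` to the generator
of the top group and `b` to a lamp of the wreath product `ℤ ≀ ℤ = ℤ^(ℤ) ⋊ ℤ` factors `φ` through
`ℤ ≀ ℤ → ℤ`, and maps `ker φ` onto the base `ℤ^(ℤ)`, which is not finitely generated.
-/

/-- A group satisfies the Howson property if the intersection of any two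
finitely generated subgroups is finitely generated. -/
def Howson (G : Type) [Group G] : Prop :=
  ∀ H K : Subgroup G, H.FG → K.FG → (H ⊓ K).FG

open Function SemidirectProduct

namespace Subgroup

variable {G G' : Type*} [Group G] [Group G'] {H : Subgroup G}

theorem FG.map (h : H.FG) (f : G →* G') : (H.map f).FG := by
  rw [fg_iff_submonoid_fg] at h ⊢
  exact h.map f

theorem FG.of_map_injective {f : G →* G'} (hf : Injective f) (h : (H.map f).FG) : H.FG := by
  rw [fg_iff_submonoid_fg] at h ⊢
  exact h.map_injective f hf

end Subgroup

theorem Howson.of_injective {H G : Type} [Group H] [Group G] (hG : Howson G) {f : H →* G}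
    (hf : Injective f) : Howson H := fun A B hA hB ↦ by
  have := hG _ _ (hA.map f) (hB.map f)
  rw [← Subgroup.map_inf_eq _ _ _ hf] at this
  exact this.of_map_injective hf

theorem MonoidHom.graph_inf_range_inl {F A : Type*} [Group F] [Group A] (φ : F →* A) :
    φ.graph ⊓ (inl F A).range = φ.ker.map (inl F A) := by
  ext ⟨x, a⟩
  simp only [Subgroup.mem_inf, mem_graph, mem_range, inl_apply, Prod.mk.injEq,
    Subgroup.mem_map, mem_ker]
  grind

theorem not_howson_prod_of_not_fg_ker {F A : Type} [Group F] [Group A] [Group.FG F]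
    (φ : F →* A) (hφ : ¬ φ.ker.FG) : ¬ Howson (F × A) := fun h ↦ by
  have := h φ.graph (MonoidHom.inl F A).range
    (by rw [φ.graph_eq_range_prod, ← Group.fg_iff_subgroup_fg]; infer_instance)
    (by rw [← Group.fg_iff_subgroup_fg]; infer_instance)
  rw [φ.graph_inf_range_inl] at this
  exact hφ (this.of_map_injective (Prod.mk_left_injective 1))

namespace SemidirectProduct

variable {F N G : Type*} [Group F] [Group N] [Group G] {ψ : G →* MulAut N}

theorem map_ker_rightHom_comp (ρ : F →* N ⋊[ψ] G) (hρ : inl.range ≤ ρ.range) :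
    (rightHom.comp ρ).ker.map ρ = inl.range := by
  rw [← MonoidHom.comap_ker, Subgroup.map_comap_eq, ← range_inl_eq_ker_rightHom,
    inf_eq_right.2 hρ]

theorem not_fg_ker_rightHom_comp (ρ : F →* N ⋊[ψ] G) (hρ : inl.range ≤ ρ.range)
    (hN : ¬ Group.FG N) : ¬ (rightHom.comp ρ).ker.FG := fun h ↦ by
  have := h.map ρ
  rw [map_ker_rightHom_comp ρ hρ, MonoidHom.range_eq_map] at this
  exact hN (Group.fg_def.2 (this.of_map_injective inl_injective))

end SemidirectProduct

theorem not_groupFG_multiplicative_finsupp {ι : Type*} [Infinite ι] :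
    ¬ Group.FG (Multiplicative (ι →₀ ℤ)) := by
  rw [← AddGroup.fg_iff_mul_fg, ← Module.Finite.iff_addGroup_fg, Module.finite_finsupp_self_iff,
    not_or, not_finite_iff_infinite]
  exact ⟨not_subsingleton ℤ, inferInstance⟩

namespace IntWreathInt

noncomputable def shift : Multiplicative ℤ →* MulAut (Multiplicative (ℤ →₀ ℤ)) where
  toFun n := (Finsupp.domCongr (Equiv.addRight n.toAdd)).toMultiplicative
  map_one' := by ext; simp [Equiv.Perm.one_def]
  map_mul' m n := by ext f i; simp [Equiv.Perm.mul_def, add_right_comm]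

lemma shift_single (n i k : ℤ) :
    shift (.ofAdd n) (.ofAdd (Finsupp.single i k)) = .ofAdd (Finsupp.single (i + n) k) := by
  simp [shift]

noncomputable def ofFreeGroup :
    FreeGroup (Fin 2) →* Multiplicative (ℤ →₀ ℤ) ⋊[shift] Multiplicative ℤ :=
  FreeGroup.lift ![inr (.ofAdd 1), inl (.ofAdd (Finsupp.single 0 1))]

lemma ofFreeGroup_of_zero_zpow (n : ℤ) : ofFreeGroup (.of 0 ^ n) = inr (.ofAdd n) := by
  rw [map_zpow, ofFreeGroup, FreeGroup.lift_apply_of]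
  simp [← map_zpow, ← ofAdd_zsmul]

lemma ofFreeGroup_of_one_zpow (n : ℤ) :
    ofFreeGroup (.of 1 ^ n) = inl (.ofAdd (Finsupp.single 0 n)) := by
  rw [map_zpow, ofFreeGroup, FreeGroup.lift_apply_of]
  simp [← map_zpow, ← ofAdd_zsmul, Finsupp.smul_single]

lemma ofFreeGroup_conj (i k : ℤ) :
    ofFreeGroup (.of 0 ^ i * .of 1 ^ k * (.of 0 ^ i)⁻¹) = inl (.ofAdd (Finsupp.single i k)) := by
  have := inl_aut (φ := shift) (.ofAdd i) (.ofAdd (Finsupp.single 0 k))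
  rw [shift_single, zero_add] at this
  rw [this]
  simp only [map_mul, map_inv, ofFreeGroup_of_zero_zpow, ofFreeGroup_of_one_zpow]

lemma range_inl_le_range_ofFreeGroup : inl.range ≤ ofFreeGroup.range := by
  suffices ∀ f : ℤ →₀ ℤ, inl (.ofAdd f) ∈ ofFreeGroup.range by
    rintro _ ⟨f, rfl⟩
    exact this f.toAdd
  intro f
  induction f using Finsupp.induction with
  | zero => exact one_mem _
  | single_add i k f _ _ ih =>
    rw [ofAdd_add, map_mul, ← ofFreeGroup_conj]
    exact mul_mem ⟨_, rfl⟩ ih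

theorem not_fg_ker : ¬ (rightHom.comp ofFreeGroup).ker.FG :=
  not_fg_ker_rightHom_comp ofFreeGroup range_inl_le_range_ofFreeGroup
    not_groupFG_multiplicative_finsupp

end IntWreathInt

/-- If a group contains `ℤ × F₂` as a subgroup (i.e. `ℤ × F₂` embeds in it),
then it does not satisfy the Howson property. -/
theorem stmt13 {G : Type} [Group G]
    (f : Multiplicative ℤ × FreeGroup (Fin 2) →* G) (hf : Function.Injective f) :
    ¬ Howson G := by
  intro hG
  have hswap : Injective (f.comp (MulEquiv.prodComm (M := FreeGroup (Fin 2))).toMonoidHom) :=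
    hf.comp MulEquiv.prodComm.injective
  exact not_howson_prod_of_not_fg_ker _ IntWreathInt.not_fg_ker (hG.of_injective hswap)
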